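/- Every vector in the SLOCC orbit of the N-qubit W state can be written (up to local unitaries and a nonzero scalar) as x₀|0…0⟩ + x₁|10…0⟩ + x₂|010…0⟩ + ⋯ + x_N|0…01⟩ with x₀ ≥ 0 and xᵢ > 0 for i = 1,…,N. Concretely: for any invertible 2×2 matrices A₁,…,A_N there exist unitaries U₁,…,U_N, reals x₀ ≥ 0, x₁,…,x_N > 0, and a nonzero scalar c such that (A₁⊗⋯⊗A_N)W_N = c·(U₁⊗⋯⊗U_N)(x₀|0…0⟩ + Σᵢ xᵢ |e_i⟩), where |e_i⟩ denotes the basis vector with a 1 in position i and 0 elsewhere. -/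

import Mathlib

/-- Kronecker (tensor) product of `N` qubit operators. -/
def kronN {N : ℕ} (A : Fin N → Matrix (Fin 2) (Fin 2) ℂ) :
    Matrix (Fin N → Fin 2) (Fin N → Fin 2) ℂ :=
  fun f g => ∏ i, A i (f i) (g i)

/-- The computational basis vector `|g⟩` of `(ℂ²)^⊗N`. -/
def bvec {N : ℕ} (g : Fin N → Fin 2) : (Fin N → Fin 2) → ℂ :=
  fun f => if f = g then 1 else 0

/-- The basis vector `|e_i⟩` with a `1` at position `i` and `0` elsewhere. -/
def evec {N : ℕ} (i : Fin N) : (Fin N → Fin 2) → ℂ :=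
  bvec (fun j => if j = i then 1 else 0)

/-- The `N`-qubit W state `(1/√N)·Σᵢ |e_i⟩`. -/
noncomputable def Wn (N : ℕ) : (Fin N → Fin 2) → ℂ :=
  fun f => if (∑ i, ((f i : ℕ))) = 1 then ((Real.sqrt N : ℝ) : ℂ)⁻¹ else 0


open Matrix Finset Complex

private lemma kronN_mul {N : ℕ} (A B : Fin N → Matrix (Fin 2) (Fin 2) ℂ) :
    kronN (fun i => A i * B i) = kronN A * kronN B := by
  funext f g
  simp only [kronN, Matrix.mul_apply]
  rw [Finset.prod_univ_sum, Fintype.piFinset_univ]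
  exact Finset.sum_congr rfl fun x _ => Finset.prod_mul_distrib

private lemma kronN_mulVec_mul {N : ℕ} (A B : Fin N → Matrix (Fin 2) (Fin 2) ℂ)
    (v : (Fin N → Fin 2) → ℂ) :
    (kronN (fun i => A i * B i)).mulVec v = (kronN A).mulVec ((kronN B).mulVec v) := by
  rw [kronN_mul, ← Matrix.mulVec_mulVec]

lemma sum_ei (N : ℕ) (x : Fin N) :
    (∑ j, (((if j = x then (1:Fin 2) else 0) : Fin 2) : ℕ)) = 1 := by
  rw [Finset.sum_congr rfl (g := fun j => if j = x then 1 else 0)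
    (fun j _ => by by_cases hj : j = x <;> simp [hj])]
  simp

lemma Wn_eq (N : ℕ) :
    Wn N = ((Real.sqrt N : ℝ) : ℂ)⁻¹ • ∑ i, evec i := by
  funext g
  simp only [Wn, Pi.smul_apply, Finset.sum_apply, smul_eq_mul, evec, bvec]
  by_cases h : (∑ i, ((g i : ℕ))) = 1
  · have hv2 : ∀ j, (g j : ℕ) < 2 := fun j => (g j).isLt
    obtain ⟨i0, hi0⟩ : ∃ i, (g i : ℕ) = 1 := by
      by_contra hc
      push_neg at hc
      have hz : ∀ i ∈ Finset.univ, (g i : ℕ) = 0 := by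
        intro i _
        have := hc i; have := hv2 i; omega
      rw [Finset.sum_eq_zero hz] at h
      omega
    have hsplit := (Finset.add_sum_erase Finset.univ (fun j => (g j : ℕ))
      (Finset.mem_univ i0)).trans h
    beta_reduce at hsplit
    have hz : ∀ j ∈ Finset.univ.erase i0, (g j : ℕ) = 0 := by
      rw [← Finset.sum_eq_zero_iff]
      omega
    have h2 : g = fun j => if j = i0 then 1 else 0 := by
      funext j
      by_cases hj : j = i0
      · subst hj; simp only [if_pos rfl]; exact Fin.ext hi0
      · simp only [if_neg hj]
        exact Fin.ext (hz j (Finset.mem_erase.mpr ⟨hj, Finset.mem_univ j⟩))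
    have hterm : ∀ x : Fin N, (if g = (fun j => if j = x then 1 else 0) then (1:ℂ) else 0)
        = if x = i0 then 1 else 0 := by
      intro x
      by_cases hx : x = i0
      · subst hx; rw [if_pos h2, if_pos rfl]
      · rw [if_neg, if_neg hx]
        intro hgx
        have hcx := congrFun hgx x
        rw [h2] at hcx
        simp [hx] at hcx
    rw [Finset.sum_congr rfl (fun x _ => hterm x), Finset.sum_ite_eq' Finset.univ i0,
      if_pos (Finset.mem_univ i0), if_pos h, mul_one]
  · rw [if_neg h, Finset.sum_eq_zero, mul_zero]
    intro x _
    rw [if_neg]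
    intro hg
    exact h (by rw [hg]; exact sum_ei N x)

lemma kron_mulVec_bvec {N : ℕ} (B : Fin N → Matrix (Fin 2) (Fin 2) ℂ) (g : Fin N → Fin 2) :
    (kronN B).mulVec (bvec g) = fun f => ∏ i, B i (f i) (g i) := by
  funext f
  simp [Matrix.mulVec, dotProduct, bvec, kronN]

lemma ent0 (a b c : ℂ) (x : Fin 2) : (!![a, b; 0, c] : Matrix (Fin 2) (Fin 2) ℂ) x 0
    = if x = 0 then a else 0 := by fin_cases x <;> simp
lemma ent1 (a b c : ℂ) (x : Fin 2) : (!![a, b; 0, c] : Matrix (Fin 2) (Fin 2) ℂ) x 1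
    = if x = 0 then b else c := by fin_cases x <;> simp

/-- product of "if f j = 0" factors over a set -/
lemma prod_if_zero {N : ℕ} (f : Fin N → Fin 2) (w : Fin N → ℂ) (s : Finset (Fin N)) :
    (∏ j ∈ s, if f j = 0 then w j else 0)
      = if (∀ j ∈ s, f j = 0) then ∏ j ∈ s, w j else 0 := by
  by_cases h : ∀ j ∈ s, f j = 0
  · rw [if_pos h]
    exact Finset.prod_congr rfl fun j hj => if_pos (h j hj)
  · rw [if_neg h]
    push_neg at h
    obtain ⟨j, hj, hfj⟩ := h
    exact Finset.prod_eq_zero hj (if_neg hfj)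

lemma kron_tri_evec {N : ℕ} (n m : Fin N → ℝ) (r : Fin N → ℂ) (i : Fin N) :
    (kronN (fun j => !![(n j : ℂ), r j; 0, (m j : ℂ)])).mulVec (evec i)
      = (r i * ∏ j ∈ Finset.univ.erase i, (n j : ℂ)) • bvec (fun _ => 0)
        + ((m i : ℂ) * ∏ j ∈ Finset.univ.erase i, (n j : ℂ)) • evec i := by
  rw [evec, kron_mulVec_bvec]
  funext f
  rw [← Finset.mul_prod_erase Finset.univ _ (Finset.mem_univ i)]
  have hfac : ∀ j ∈ Finset.univ.erase i,
      (!![(n j : ℂ), r j; 0, (m j : ℂ)] : Matrix (Fin 2) (Fin 2) ℂ) (f j)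
        (if j = i then 1 else 0)
      = if f j = 0 then (n j : ℂ) else 0 := by
    intro j hj
    rw [if_neg (Finset.mem_erase.mp hj).1, ent0]
  rw [Finset.prod_congr rfl hfac, prod_if_zero, if_pos rfl, ent1]
  simp only [Pi.add_apply, Pi.smul_apply, smul_eq_mul, bvec, evec]
  by_cases hrest : ∀ j ∈ Finset.univ.erase i, f j = 0
  · rw [if_pos hrest]
    by_cases hfi : f i = 0
    · have hf0 : f = fun _ => 0 := by
        funext j
        by_cases hj : j = i
        · rw [hj, hfi]
        · exact hrest j (Finset.mem_erase.mpr ⟨hj, Finset.mem_univ j⟩)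
      have hfne : f ≠ fun j => if j = i then 1 else 0 := by
        intro hc
        have h5 := congrFun hc i
        simp only [if_pos rfl] at h5
        rw [hfi] at h5
        exact absurd h5 (by decide)
      rw [if_pos hfi, if_pos hf0, if_neg hfne]
      ring
    · have hfi1 : f i = 1 := by omega
      have hf1 : f = fun j => if j = i then 1 else 0 := by
        funext j
        by_cases hj : j = i
        · rw [hj, if_pos rfl, hfi1]
        · rw [if_neg hj]; exact hrest j (Finset.mem_erase.mpr ⟨hj, Finset.mem_univ j⟩)
      have hfne : f ≠ fun _ => 0 := by
        intro hc
        exact hfi (congrFun hc i)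
      rw [if_neg hfi, if_pos hf1, if_neg hfne]
      ring
  · rw [if_neg hrest, mul_zero]
    push_neg at hrest
    obtain ⟨j, hj, hfj⟩ := hrest
    have h1 : f ≠ fun _ => 0 := fun hc => hfj (congrFun hc j)
    have h2 : f ≠ fun k => if k = i then 1 else 0 := by
      intro hc
      have := congrFun hc j
      rw [if_neg (Finset.mem_erase.mp hj).1] at this
      exact hfj this
    rw [if_neg h1, if_neg h2]
    ring

lemma kron_diag_bvec0 {N : ℕ} (a c : ℂ) :
    (kronN (fun _ : Fin N => !![a, 0; 0, c])).mulVec (bvec (fun _ => 0))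
      = (a ^ N) • bvec (fun _ => 0) := by
  rw [kron_mulVec_bvec]
  funext f
  have hfac : ∀ j ∈ Finset.univ, (!![a, 0; 0, c] : Matrix (Fin 2) (Fin 2) ℂ) (f j) (0 : Fin 2)
      = if f j = 0 then a else 0 := fun j _ => ent0 a 0 c (f j)
  rw [Finset.prod_congr rfl hfac, prod_if_zero]
  simp only [Pi.smul_apply, smul_eq_mul, bvec]
  by_cases h : ∀ j ∈ Finset.univ, f j = 0
  · have hf : f = fun _ => 0 := funext fun j => h j (Finset.mem_univ j)
    rw [if_pos h, if_pos hf, Finset.prod_const, Finset.card_univ, Fintype.card_fin, mul_one]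
  · have hf : f ≠ fun _ => 0 := by
      intro hc; exact h (fun j _ => congrFun hc j)
    rw [if_neg h, if_neg hf, mul_zero]

lemma kron_diag_evec {N : ℕ} (a c : ℂ) (i : Fin N) :
    (kronN (fun _ : Fin N => !![a, 0; 0, c])).mulVec (evec i)
      = (a ^ (N - 1) * c) • evec i := by
  rw [evec, kron_mulVec_bvec]
  funext f
  rw [← Finset.mul_prod_erase Finset.univ _ (Finset.mem_univ i), if_pos rfl, ent1]
  have hfac : ∀ j ∈ Finset.univ.erase i, (!![a, 0; 0, c] : Matrix (Fin 2) (Fin 2) ℂ) (f j)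
      (if j = i then 1 else 0) = if f j = 0 then a else 0 := by
    intro j hj
    rw [if_neg (Finset.mem_erase.mp hj).1, ent0]
  rw [Finset.prod_congr rfl hfac, prod_if_zero]
  simp only [Pi.smul_apply, smul_eq_mul, evec, bvec]
  have hcard : (Finset.univ.erase i).card = N - 1 := by
    rw [Finset.card_erase_of_mem (Finset.mem_univ i), Finset.card_univ, Fintype.card_fin]
  by_cases hrest : ∀ j ∈ Finset.univ.erase i, f j = 0
  · rw [if_pos hrest, Finset.prod_const, hcard]
    by_cases hfi : f i = 0
    · have hfne : f ≠ fun j => if j = i then 1 else 0 := by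
        intro hc
        have := congrFun hc i
        simp [hfi] at this
      rw [if_pos hfi, if_neg hfne]
      ring
    · have hfi1 : f i = 1 := by omega
      have hf1 : f = fun j => if j = i then 1 else 0 := by
        funext j
        by_cases hj : j = i
        · rw [hj, if_pos rfl, hfi1]
        · rw [if_neg hj]; exact hrest j (Finset.mem_erase.mpr ⟨hj, Finset.mem_univ j⟩)
      rw [if_neg hfi, if_pos hf1]
      ring
  · rw [if_neg hrest, mul_zero]
    push_neg at hrest
    obtain ⟨j, hj, hfj⟩ := hrest
    have h2 : f ≠ fun k => if k = i then 1 else 0 := by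
      intro hc
      have := congrFun hc j
      rw [if_neg (Finset.mem_erase.mp hj).1] at this
      exact hfj this
    rw [if_neg h2, mul_zero]

lemma qr2 (A : Matrix (Fin 2) (Fin 2) ℂ) (hA : IsUnit A) :
    ∃ (Q : Matrix (Fin 2) (Fin 2) ℂ) (n m : ℝ) (r : ℂ),
      Q ∈ Matrix.unitaryGroup (Fin 2) ℂ ∧ 0 < n ∧ 0 < m ∧
      A = Q * !![(n : ℂ), r; 0, (m : ℂ)] := by
  have hdet : A.det ≠ 0 := by
    intro h
    have := (Matrix.isUnit_iff_isUnit_det A).mp hA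
    rw [h] at this
    exact (not_isUnit_zero this : False)
  set a := A 0 0 with ha
  set b := A 1 0 with hb
  have hd2 : A.det = a * A 1 1 - A 0 1 * b := by
    rw [Matrix.det_fin_two]
  have hab : normSq a + normSq b ≠ 0 := by
    intro h
    have ha0 : a = 0 := by
      have := normSq_nonneg a; have := normSq_nonneg b
      have : normSq a = 0 := by linarith
      exact normSq_eq_zero.mp this
    have hb0 : b = 0 := by
      have := normSq_nonneg a; have := normSq_nonneg b
      have : normSq b = 0 := by linarith
      exact normSq_eq_zero.mp this
    apply hdet
    rw [hd2, ha0, hb0]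
    ring
  have habpos : 0 < normSq a + normSq b := by
    rcases (normSq_nonneg a).lt_or_eq with h | h
    · have := normSq_nonneg b; linarith
    · rcases (normSq_nonneg b).lt_or_eq with h' | h'
      · linarith
      · exact absurd (by rw [← h, ← h']; norm_num) hab
  set n : ℝ := Real.sqrt (normSq a + normSq b) with hn
  have hnpos : 0 < n := Real.sqrt_pos.mpr habpos
  have hnC : (n : ℂ) ≠ 0 := by exact_mod_cast hnpos.ne'
  have hn2 : (n : ℂ) * (n : ℂ) = (starRingEnd ℂ) a * a + (starRingEnd ℂ) b * b := by
    have : (n : ℝ) * n = normSq a + normSq b := Real.mul_self_sqrt habpos.le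
    rw [← Complex.normSq_eq_conj_mul_self, ← Complex.normSq_eq_conj_mul_self,
      ← Complex.ofReal_add, ← this, Complex.ofReal_mul]
  obtain ⟨md, u, hmdpos, huu, hud⟩ :
      ∃ (md : ℝ) (u : ℂ), 0 < md ∧ (starRingEnd ℂ) u * u = 1 ∧
        (starRingEnd ℂ) u * A.det = (md : ℂ) := by
    refine ⟨‖A.det‖, A.det / (‖A.det‖ : ℂ), norm_pos_iff.mpr hdet, ?_, ?_⟩
    · rw [map_div₀, Complex.conj_ofReal, div_mul_div_comm,
        ← Complex.normSq_eq_conj_mul_self, Complex.normSq_eq_norm_sq]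
      have habs : ((‖A.det‖ : ℝ) : ℂ) ≠ 0 := by
        exact_mod_cast (norm_ne_zero_iff.mpr hdet)
      push_cast
      field_simp
    · rw [map_div₀, Complex.conj_ofReal, div_mul_eq_mul_div,
        ← Complex.normSq_eq_conj_mul_self, Complex.normSq_eq_norm_sq]
      have habs : ((‖A.det‖ : ℝ) : ℂ) ≠ 0 := by
        exact_mod_cast (norm_ne_zero_iff.mpr hdet)
      push_cast
      field_simp
  set Q : Matrix (Fin 2) (Fin 2) ℂ :=
    !![a / n, -((starRingEnd ℂ) b) * u / n; b / n, ((starRingEnd ℂ) a) * u / n] with hQ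
  have hQmem : Q ∈ Matrix.unitaryGroup (Fin 2) ℂ := by
    rw [Matrix.mem_unitaryGroup_iff']
    ext i j
    fin_cases i <;> fin_cases j <;>
      simp only [hQ, Matrix.mul_apply, Fin.sum_univ_two, Matrix.conjTranspose_apply,
        Matrix.one_apply, map_div₀, Complex.conj_ofReal, _root_.map_mul, map_neg, Fin.zero_eta, Fin.mk_one,
        Matrix.star_apply, Complex.star_def, Complex.conj_conj, zero_ne_one, one_ne_zero, ↓reduceIte,
        Matrix.of_apply, Matrix.cons_val', Matrix.cons_val_zero, Matrix.cons_val_one, Matrix.head_cons,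
        Matrix.head_fin_const, Matrix.empty_val', Matrix.cons_val_fin_one] <;>
      field_simp
    all_goals first
      | ring1
      | linear_combination hn2
      | linear_combination -hn2
      | linear_combination ((starRingEnd ℂ) b * b + (starRingEnd ℂ) a * a) * huu - hn2
      | linear_combination ((starRingEnd ℂ) b * b + (starRingEnd ℂ) a * a) * huu + hn2
      | linear_combination (↑n * ↑n) * huu
  have humd : u * (md : ℂ) = A.det := by
    linear_combination (-u) * hud + A.det * huu
  refine ⟨Q, n, md / n, ((starRingEnd ℂ) a * A 0 1 + (starRingEnd ℂ) b * A 1 1) / n,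
    hQmem, hnpos, div_pos hmdpos hnpos, ?_⟩
  ext i j
  fin_cases i <;> fin_cases j <;>
    simp only [hQ, Matrix.mul_apply, Fin.sum_univ_two,
      Matrix.of_apply, Matrix.cons_val', Matrix.cons_val_zero, Matrix.cons_val_one, Matrix.head_cons,
      Matrix.head_fin_const, Matrix.empty_val', Matrix.cons_val_fin_one] <;>
    push_cast <;>
    field_simp
  all_goals first
    | ring1
    | linear_combination A 1 1 * hn2 - (starRingEnd ℂ) a * humd - (starRingEnd ℂ) a * hd2
    | linear_combination A 0 1 * hn2 + (starRingEnd ℂ) b * humd + (starRingEnd ℂ) b * hd2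

lemma nth_root_exists (μ : ℂ) (hμ0 : μ ≠ 0) (habs : ‖μ‖ = 1) (N : ℕ) (hN : 1 ≤ N) :
    ∃ α : ℂ, α ^ N = μ ∧ ‖α‖ = 1 := by
  refine ⟨Complex.exp (Complex.log μ / N), ?_, ?_⟩
  · rw [← Complex.exp_nat_mul]
    rw [mul_div_cancel₀ _ (by exact_mod_cast Nat.one_le_iff_ne_zero.mp hN : (N:ℂ) ≠ 0)]
    exact Complex.exp_log hμ0
  · rw [Complex.norm_exp]
    have : (Complex.log μ / N).re = 0 := by
      rw [show ((N:ℂ)) = ((N:ℝ):ℂ) by push_cast; ring, Complex.div_ofReal_re,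
        Complex.log_re, habs, Real.log_one, zero_div]
    rw [this, Real.exp_zero]

/-- every vector in the SLOCC orbit of the `N`-qubit W state is, up to
local unitaries and a nonzero scalar, of the form
`x₀|0…0⟩ + Σᵢ xᵢ|e_i⟩` with `x₀ ≥ 0` and `xᵢ > 0`. -/
theorem stmt17 (N : ℕ) (hN : 1 ≤ N) (A : Fin N → Matrix (Fin 2) (Fin 2) ℂ)
    (hA : ∀ i, IsUnit (A i)) :
    ∃ (U : Fin N → Matrix (Fin 2) (Fin 2) ℂ) (x0 : ℝ) (x : Fin N → ℝ) (cc : ℂ),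
      (∀ i, U i ∈ Matrix.unitaryGroup (Fin 2) ℂ) ∧ 0 ≤ x0 ∧ (∀ i, 0 < x i) ∧ cc ≠ 0 ∧
      (kronN A).mulVec (Wn N) =
        cc • (kronN U).mulVec
          ((x0 : ℂ) • bvec (fun _ => 0) + ∑ i, ((x i : ℝ) : ℂ) • evec i) := by

  classical
  -- QR-decompose each local operator
  choose Q n m r hQmem hn hm hAQR using fun i => qr2 (A i) (hA i)
  set Rm : Fin N → Matrix (Fin 2) (Fin 2) ℂ := fun i => !![(n i : ℂ), r i; 0, (m i : ℂ)]
    with hRm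
  have hL : A = fun i => Q i * Rm i := funext hAQR
  have hNr : (0:ℝ) < Real.sqrt N := Real.sqrt_pos.mpr (by exact_mod_cast hN)
  set cR : ℝ := (Real.sqrt N)⁻¹ with hcR
  have hcRpos : 0 < cR := inv_pos.mpr hNr
  set P : Fin N → ℝ := fun i => ∏ j ∈ Finset.univ.erase i, n j with hP
  have hPpos : ∀ i, 0 < P i := fun i => Finset.prod_pos (fun j _ => hn j)
  set x : Fin N → ℝ := fun i => cR * (m i * P i) with hx
  set s : ℂ := (cR : ℂ) * ∑ i, r i * ((P i : ℝ) : ℂ) with hs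
  have hPC : ∀ i, ((P i : ℝ) : ℂ) = ∏ j ∈ Finset.univ.erase i, ((n j : ℝ) : ℂ) := by
    intro i
    rw [hP]
    push_cast
    rfl
  have hcRC : ((cR : ℝ) : ℂ) = ((Real.sqrt N : ℝ) : ℂ)⁻¹ := by
    rw [hcR]; push_cast; ring
  have step2 : (kronN Rm).mulVec (Wn N)
      = s • bvec (fun _ => 0) + ∑ i, ((x i : ℝ) : ℂ) • evec i := by
    rw [Wn_eq, ← Matrix.mulVecLin_apply, _root_.map_smul, map_sum]
    simp only [Matrix.mulVecLin_apply]
    rw [Finset.sum_congr rfl (fun i _ => kron_tri_evec n m r i), Finset.sum_add_distrib,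
      smul_add]
    congr 1
    · rw [← Finset.sum_smul, smul_smul, hs]
      congr 1
      rw [← hcRC]
      congr 1
      exact Finset.sum_congr rfl fun i _ => by rw [hPC]
    · rw [Finset.smul_sum]
      refine Finset.sum_congr rfl fun i _ => ?_
      rw [smul_smul]
      congr 1
      rw [hx]
      push_cast
      rw [hPC, ← hcRC]
  -- phase adjustment
  set x0 : ℝ := ‖s‖ with hx0
  set μ : ℂ := if s = 0 then 1 else s / ((x0 : ℝ) : ℂ) with hμ
  have hμ0 : μ ≠ 0 := by
    rw [hμ]
    split
    · exact one_ne_zero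
    · rename_i hs0
      refine div_ne_zero hs0 ?_
      rw [hx0]
      exact_mod_cast (norm_ne_zero_iff.mpr hs0)
  have hμabs : ‖μ‖ = 1 := by
    rw [hμ]
    split
    · exact norm_one
    · rename_i hs0
      rw [norm_div, hx0, Complex.norm_real, Real.norm_of_nonneg (norm_nonneg s)]
      field_simp [norm_ne_zero_iff.mpr hs0]
  have hμx0 : μ * ((x0 : ℝ) : ℂ) = s := by
    rw [hμ]
    split
    · rename_i hs0
      rw [hx0, hs0]
      simp
    · rename_i hs0
      rw [div_mul_cancel₀]
      rw [hx0]
      exact_mod_cast (norm_ne_zero_iff.mpr hs0)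
  obtain ⟨α, hαN, hαabs⟩ := nth_root_exists μ hμ0 hμabs N hN
  have hα0 : α ≠ 0 := by
    intro h
    rw [h, norm_zero] at hαabs
    norm_num at hαabs
  set γ : ℂ := (α ^ (N - 1))⁻¹ with hγ
  have hαγ : α ^ (N - 1) * γ = 1 := mul_inv_cancel₀ (pow_ne_zero _ hα0)
  have hγabs : ‖γ‖ = 1 := by
    rw [hγ, norm_inv, norm_pow, hαabs, one_pow, inv_one]
  have hconjα : (starRingEnd ℂ) α * α = 1 := by
    rw [← Complex.normSq_eq_conj_mul_self, Complex.normSq_eq_norm_sq, hαabs]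
    norm_num
  have hconjγ : (starRingEnd ℂ) γ * γ = 1 := by
    rw [← Complex.normSq_eq_conj_mul_self, Complex.normSq_eq_norm_sq, hγabs]
    norm_num
  have hVmem : (!![α, 0; 0, γ] : Matrix (Fin 2) (Fin 2) ℂ) ∈ Matrix.unitaryGroup (Fin 2) ℂ := by
    rw [Matrix.mem_unitaryGroup_iff']
    ext i j
    fin_cases i <;> fin_cases j <;>
      simp [Matrix.mul_apply, Fin.sum_univ_two, Matrix.conjTranspose_apply, Matrix.one_apply,
        hconjα, hconjγ]
  have key : (kronN (fun _ : Fin N => !![α, 0; 0, γ])).mulVec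
        ((x0 : ℂ) • bvec (fun _ => 0) + ∑ i, ((x i : ℝ) : ℂ) • evec i)
      = s • bvec (fun _ => 0) + ∑ i, ((x i : ℝ) : ℂ) • evec i := by
    rw [← Matrix.mulVecLin_apply, map_add, _root_.map_smul, map_sum]
    simp only [_root_.map_smul, Matrix.mulVecLin_apply]
    rw [kron_diag_bvec0, Finset.sum_congr rfl (fun i _ => by rw [kron_diag_evec])]
    congr 1
    · rw [smul_smul, hαN, mul_comm, hμx0]
    · exact Finset.sum_congr rfl fun i _ => by rw [smul_smul, hαγ, mul_one]
  refine ⟨fun i => Q i * !![α, 0; 0, γ], x0, x, 1,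
    fun i => mul_mem (hQmem i) hVmem, norm_nonneg s,
    fun i => mul_pos hcRpos (mul_pos (hm i) (hPpos i)), one_ne_zero, ?_⟩
  rw [one_smul]
  calc (kronN A).mulVec (Wn N)
      = (kronN Q).mulVec ((kronN Rm).mulVec (Wn N)) := by
        rw [hL]; exact kronN_mulVec_mul Q Rm _
    _ = (kronN Q).mulVec (s • bvec (fun _ => 0) + ∑ i, ((x i : ℝ) : ℂ) • evec i) := by
        rw [step2]
    _ = (kronN Q).mulVec ((kronN (fun _ : Fin N => !![α, 0; 0, γ])).mulVec
          ((x0 : ℂ) • bvec (fun _ => 0) + ∑ i, ((x i : ℝ) : ℂ) • evec i)) := by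
        rw [key]
    _ = (kronN fun i => Q i * !![α, 0; 0, γ]).mulVec
          ((x0 : ℂ) • bvec (fun _ => 0) + ∑ i, ((x i : ℝ) : ℂ) • evec i) :=
        (kronN_mulVec_mul Q (fun _ => !![α, 0; 0, γ]) _).symm
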